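/- arXiv:2204.03298 — 2 statements merged into one kernel-verified Lean document; each statement's English description precedes it below -/
import Mathlib

section
/- Let ⟪-,-⟫ be a double (12)-weak Poisson bracket on A associated with the right bimodule structure. Then there is a unique Poisson bracket {-,-}_Sym on the symmetric algebra Sym(A/[A,A]) of the k-vector space A/[A,A] such that {ā,b̄}_Sym = π₂(⟪a,b⟫) for all a,b ∈ A, where ā denotes the class of a in A/[A,A] and π₂ : A⊗A → Sym(A/[A,A]) sends x⊗y to the product of the classes of x and y. -/
open scoped TensorProduct

noncomputable section

/-- A (`k`-linear) `A`-bimodule-type structure on a `k`-module `M`,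
given by a three-slot action `a · d · b`. -/
structure BimodOn (k A M : Type*) [CommSemiring k] [Ring A] [Algebra k A]
    [AddCommMonoid M] [Module k M] where
  act : A → M → A → M
  add_left : ∀ (a a' : A) (d : M) (b : A), act (a + a') d b = act a d b + act a' d b
  add_mid : ∀ (a : A) (d d' : M) (b : A), act a (d + d') b = act a d b + act a d' b
  add_right : ∀ (a : A) (d : M) (b b' : A), act a d (b + b') = act a d b + act a d b'
  smul_left : ∀ (c : k) (a : A) (d : M) (b : A), act (c • a) d b = c • act a d b
  smul_mid : ∀ (c : k) (a : A) (d : M) (b : A), act a (c • d) b = c • act a d b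
  smul_right : ∀ (c : k) (a : A) (d : M) (b : A), act a d (c • b) = c • act a d b
  act_one_one : ∀ d : M, act 1 d 1 = d
  act_mul : ∀ (a a' : A) (d : M) (b b' : A), act a (act a' d b') b = act (a * a') d (b' * b)

/-- An `A`-bimodule structure on `A ⊗[k] A`. -/
abbrev BimodStr (k A : Type*) [CommSemiring k] [Ring A] [Algebra k A] :=
  BimodOn k A (A ⊗[k] A)

section Defs

variable (k A : Type*) [CommSemiring k] [Ring A] [Algebra k A]

/-- The swap automorphism `°` of `A ⊗[k] A`, `a ⊗ b ↦ b ⊗ a`. -/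
def swapT : A ⊗[k] A →ₗ[k] A ⊗[k] A := (TensorProduct.comm k A A).toLinearMap

variable {k A}

namespace BimodOn

/-- The swap bimodule structure `a * d * b = (a · d° · b)°` associated with a
bimodule structure on `A ⊗[k] A`. -/
def star (S : BimodStr k A) (a : A) (d : A ⊗[k] A) (b : A) : A ⊗[k] A :=
  swapT k A (S.act a (swapT k A d) b)

/-- A bimodule structure on `A ⊗[k] A` is swap-commuting if it commutes with its
swap bimodule structure. -/
def SwapCommuting (S : BimodStr k A) : Prop :=
  ∀ (a₁ a₂ b₁ b₂ : A) (d : A ⊗[k] A),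
    S.act a₁ (S.star a₂ d b₂) b₁ = S.star a₂ (S.act a₁ d b₁) b₂

end BimodOn

end Defs

/-- A double bracket on `A` associated with a bimodule structure `S` on `A ⊗[k] A`
(with swap bimodule structure `S.star`). -/
structure DoubleBracket {k A : Type*} [CommSemiring k] [Ring A] [Algebra k A]
    (S : BimodStr k A) where
  br : A →ₗ[k] A →ₗ[k] A ⊗[k] A
  antisymm : ∀ a b : A, br a b = - swapT k A (br b a)
  leibniz_right : ∀ a b c : A, br a (b * c) = S.act b (br a c) 1 + S.act 1 (br a b) c
  leibniz_left : ∀ a b c : A, br (b * c) a = S.star b (br c a) 1 + S.star 1 (br b a) c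

section Taus

variable (k A : Type*) [CommSemiring k] [Ring A] [Algebra k A]

/-- `τ_{(123)}` on `A^{⊗3}`: `a ⊗ b ⊗ c ↦ c ⊗ a ⊗ b`. -/
def tau123 : (A ⊗[k] A) ⊗[k] A →ₗ[k] (A ⊗[k] A) ⊗[k] A :=
  ((TensorProduct.comm k (A ⊗[k] A) A).trans (TensorProduct.assoc k A A A).symm).toLinearMap

/-- `τ_{(132)}` on `A^{⊗3}`: `a ⊗ b ⊗ c ↦ b ⊗ c ⊗ a`. -/
def tau132 : (A ⊗[k] A) ⊗[k] A →ₗ[k] (A ⊗[k] A) ⊗[k] A :=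
  ((TensorProduct.assoc k A A A).trans (TensorProduct.comm k A (A ⊗[k] A))).toLinearMap

/-- `τ_{(12)}` on `A^{⊗3}`: `a ⊗ b ⊗ c ↦ b ⊗ a ⊗ c`. -/
def tau12 : (A ⊗[k] A) ⊗[k] A →ₗ[k] (A ⊗[k] A) ⊗[k] A :=
  (TensorProduct.congr (TensorProduct.comm k A A) (LinearEquiv.refl k A)).toLinearMap

variable {k A}

/-- `⟪a, -⟫_L : A ⊗ A → A ⊗ A ⊗ A`, `b₁ ⊗ b₂ ↦ ⟪a, b₁⟫ ⊗ b₂`. -/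
def trL (br : A →ₗ[k] A →ₗ[k] A ⊗[k] A) (a : A) :
    A ⊗[k] A →ₗ[k] (A ⊗[k] A) ⊗[k] A :=
  TensorProduct.map (br a) LinearMap.id

/-- The double Jacobiator of a bilinear operation `A × A → A ⊗ A`:
`⟪a,b,c⟫ = ⟪a,⟪b,c⟫⟫_L + τ_{(123)} ⟪b,⟪c,a⟫⟫_L + τ_{(132)} ⟪c,⟪a,b⟫⟫_L`. -/
def jac (br : A →ₗ[k] A →ₗ[k] A ⊗[k] A) (a b c : A) : (A ⊗[k] A) ⊗[k] A :=
  trL br a (br b c) + tau123 k A (trL br b (br c a)) + tau132 k A (trL br c (br a b))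

end Taus

end

/-- The `k`-span of commutators `[A,A]` in `A`. -/
def commSpan (k A : Type*) [CommSemiring k] [Ring A] [Algebra k A] : Submodule k A :=
  Submodule.span k {x : A | ∃ a b : A, x = a * b - b * a}

/-- `π₂ : A ⊗ A → R`, `x ⊗ y ↦ (ι x̄)(ι ȳ)`, for a commutative algebra `R` receiving
`A/[A,A]` through a linear map `ι`. -/
noncomputable def piTwo {k A R : Type*} [CommRing k] [Ring A] [Algebra k A]
    [CommRing R] [Algebra k R] (ι : (A ⧸ commSpan k A) →ₗ[k] R) :
    A ⊗[k] A →ₗ[k] R :=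
  TensorProduct.lift ((LinearMap.mul k R).compl₁₂
    (ι.comp (commSpan k A).mkQ) (ι.comp (commSpan k A).mkQ))

/-!
Write `V = A/[A,A]`. Since `R` is the symmetric algebra on `V`, a derivation of `R` may be
prescribed arbitrarily on `V` (lift `R` to the dual numbers `R[ε]`) and is determined by its values
there; hence every bilinear map `V × V → R` extends uniquely to a biderivation of `R`. Antisymmetry
and the Jacobi identity of a biderivation are again (bi)derivation identities in each argument, so
they hold as soon as they hold on `V`.

For the right bimodule structure `π₂ ⟪a, -⟫` kills commutators because `π₂` is a trace,
`π₂ (d' ⊗ x d'') = π₂ (d' ⊗ d'' x)`, and `π₂ ⟪-, b⟫` does by antisymmetry. On generators the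
Jacobiator of the induced bracket is `π₃ ⟪a,b,c⟫ - π₃ ⟪a,c,b⟫`, where `π₃` multiplies the classes
of the three tensor factors; `π₃` is invariant under all permutations `τ_σ`, so this vanishes by
cyclicity and the `(12)`-weak Poisson identity.
-/

universe u

theorem IsSymmetricAlgebra.of_forall_existsUnique {k M R : Type u} [CommRing k]
    [AddCommMonoid M] [Module k M] [CommRing R] [Algebra k R] {f : M →ₗ[k] R}
    (hf : ∀ (B : Type u) [CommRing B] [Algebra k B] (g : M →ₗ[k] B),
      ∃! F : R →ₐ[k] B, ∀ m, F (f m) = g m) :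
    IsSymmetricAlgebra f := by
  obtain ⟨e, he, -⟩ := hf (SymmetricAlgebra k M) (SymmetricAlgebra.ι k M)
  have h_lift_e : (SymmetricAlgebra.lift f).comp e = AlgHom.id k R :=
    (hf R f).unique (fun m => by simp [he]) (fun m => rfl)
  have h_e_lift : e.comp (SymmetricAlgebra.lift f) = AlgHom.id k (SymmetricAlgebra k M) :=
    SymmetricAlgebra.algHom_ext (LinearMap.ext fun m => by simp [he])
  exact Function.bijective_iff_has_inverse.mpr
    ⟨e, fun x => congr($h_e_lift x), fun x => congr($h_lift_e x)⟩

section Biderivation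

variable {k M R : Type*} [CommRing k] [AddCommMonoid M] [Module k M] [CommRing R] [Algebra k R]

def IsBiderivation (P : R →ₗ[k] R →ₗ[k] R) : Prop :=
  (∀ x y z, P x (y * z) = y * P x z + P x y * z) ∧
    (∀ x y z, P (x * y) z = x * P y z + y * P x z)

theorem IsBiderivation.neg_flip {P : R →ₗ[k] R →ₗ[k] R} (hP : IsBiderivation P) :
    IsBiderivation (-P.flip) := by
  constructor <;> intro x y z <;>
    simp only [LinearMap.neg_apply, LinearMap.flip_apply, hP.1, hP.2] <;> ring

namespace IsSymmetricAlgebra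

variable {f : M →ₗ[k] R}

theorem derivation_ext (h : IsSymmetricAlgebra f) {N : Type*} [AddCommGroup N] [Module R N]
    [Module k N] [IsScalarTower k R N] {D₁ D₂ : Derivation k R N}
    (hD : ∀ m, D₁ (f m) = D₂ (f m)) : D₁ = D₂ := by
  ext x
  induction x using h.induction with
  | algebraMap r => simp only [Derivation.map_algebraMap]
  | ι m => exact hD m
  | mul x y hx hy => simp only [Derivation.leibniz, hx, hy]
  | add x y hx hy => simp only [map_add, hx, hy]

theorem linearMap_ext_of_leibniz (h : IsSymmetricAlgebra f) {F G : R →ₗ[k] R}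
    (hF : ∀ x y, F (x * y) = x * F y + y * F x) (hG : ∀ x y, G (x * y) = x * G y + y * G x)
    (hFG : ∀ m, F (f m) = G (f m)) : F = G := by
  have := h.derivation_ext (D₁ := Derivation.mk' F hF) (D₂ := Derivation.mk' G hG) hFG
  exact LinearMap.ext fun x => congr($this x)

theorem exists_derivation (h : IsSymmetricAlgebra f) (L : M →ₗ[k] R) :
    ∃ D : Derivation k R R, ∀ m, D (f m) = L m := by
  set g : R →ₐ[k] DualNumber R := h.lift (f.prod L : M →ₗ[k] DualNumber R)
  have hg_fst : (TrivSqZeroExt.fstHom k R R).comp g = AlgHom.id k R :=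
    h.algHom_ext (LinearMap.ext fun m => congr_arg TrivSqZeroExt.fst (h.lift_eq _ m))
  have hfst (x : R) : (g x).fst = x := congr($hg_fst x)
  refine ⟨Derivation.mk' ((TrivSqZeroExt.sndHom R R).restrictScalars k ∘ₗ g.toLinearMap)
    fun x y => ?_, fun m => congr_arg TrivSqZeroExt.snd (h.lift_eq _ m)⟩
  simp [TrivSqZeroExt.snd_mul, hfst, mul_comm]

noncomputable def derivationEquiv (h : IsSymmetricAlgebra f) :
    Derivation k R R ≃ₗ[k] (M →ₗ[k] R) :=
  LinearEquiv.ofBijective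
    ({ toFun := fun D => (D : R →ₗ[k] R) ∘ₗ f
       map_add' := fun _ _ => rfl
       map_smul' := fun _ _ => rfl } : Derivation k R R →ₗ[k] M →ₗ[k] R)
    ⟨fun _ _ hD => h.derivation_ext fun m => congr($hD m),
      fun L => (h.exists_derivation L).imp fun _ hD => LinearMap.ext hD⟩

theorem derivationEquiv_symm_apply_self (h : IsSymmetricAlgebra f) (L : M →ₗ[k] R) (m : M) :
    h.derivationEquiv.symm L (f m) = L m :=
  congr($(h.derivationEquiv.apply_symm_apply L) m)

theorem exists_isBiderivation (h : IsSymmetricAlgebra f) (β : M →ₗ[k] M →ₗ[k] R) :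
    ∃ P : R →ₗ[k] R →ₗ[k] R, IsBiderivation P ∧ ∀ m n, P (f m) (f n) = β m n := by
  set E := h.derivationEquiv.symm
  let Γ : R →ₗ[k] M →ₗ[k] R := LinearMap.mk₂ k (fun y m => E (β m) y)
    (fun y y' m => (E (β m)).map_add y y') (fun c y m => (E (β m)).map_smul c y)
    (fun _ _ _ => by simp) (fun _ _ _ => by simp)
  let P : R →ₗ[k] R →ₗ[k] R := LinearMap.mk₂ k (fun x y => E (Γ y) x)
    (fun x x' y => (E (Γ y)).map_add x x') (fun c x y => (E (Γ y)).map_smul c x)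
    (fun _ _ _ => by simp) (fun _ _ _ => by simp)
  have hΓ_gen (m : M) (y : R) : E (Γ y) (f m) = E (β m) y :=
    h.derivationEquiv_symm_apply_self _ m
  have hΓ_mul (y z : R) : E (Γ (y * z)) = y • E (Γ z) + z • E (Γ y) :=
    h.derivation_ext fun m => by
      simp only [Derivation.add_apply, Derivation.smul_apply]
      rw [hΓ_gen, hΓ_gen, hΓ_gen, Derivation.leibniz]
  refine ⟨P, ⟨fun x y z => ?_, fun x y z => Derivation.leibniz _ _ _⟩,
    fun m n => (hΓ_gen m (f n)).trans (h.derivationEquiv_symm_apply_self _ n)⟩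
  change E (Γ (y * z)) x = y * E (Γ z) x + E (Γ y) x * z
  rw [hΓ_mul, Derivation.add_apply, Derivation.smul_apply, Derivation.smul_apply, smul_eq_mul,
    smul_eq_mul, mul_comm z]

theorem biderivation_ext (h : IsSymmetricAlgebra f) {P Q : R →ₗ[k] R →ₗ[k] R}
    (hP : IsBiderivation P) (hQ : IsBiderivation Q)
    (hPQ : ∀ m n, P (f m) (f n) = Q (f m) (f n)) : P = Q := by
  have h_gen (m : M) : P (f m) = Q (f m) :=
    h.linearMap_ext_of_leibniz (fun x y => by rw [hP.1]; ring) (fun x y => by rw [hQ.1]; ring)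
      (hPQ m)
  have h_flip (y : R) : P.flip y = Q.flip y :=
    h.linearMap_ext_of_leibniz (fun x x' => hP.2 x x' y) (fun x x' => hQ.2 x x' y)
      fun m => congr($(h_gen m) y)
  exact LinearMap.ext₂ fun x y => congr($(h_flip y) x)

theorem antisymm_of_generators (h : IsSymmetricAlgebra f) {P : R →ₗ[k] R →ₗ[k] R}
    (hP : IsBiderivation P)
    (hanti : ∀ m n, P (f m) (f n) = -P (f n) (f m)) (x y : R) : P x y = -P y x :=
  congr($(h.biderivation_ext hP hP.neg_flip hanti) x y)

theorem jacobi_of_generators (h : IsSymmetricAlgebra f) {P : R →ₗ[k] R →ₗ[k] R}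
    (hP : IsBiderivation P) (hanti : ∀ x y, P x y = -P y x)
    (hJ : ∀ l m n,
      P (f l) (P (f m) (f n)) + P (f m) (P (f n) (f l)) + P (f n) (P (f l) (f m)) = 0)
    (x y z : R) : P x (P y z) + P y (P z x) + P z (P x y) = 0 := by
  let J (y z : R) : R →ₗ[k] R := P.flip (P y z) + P y ∘ₗ P z + P z ∘ₗ P.flip y
  have hJ_apply (x y z : R) : J y z x = P x (P y z) + P y (P z x) + P z (P x y) := rfl
  have hJ_cycle (x y z : R) : J y z x = J z x y := by rw [hJ_apply, hJ_apply]; ring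
  have hJ_leibniz (y z x x' : R) : J y z (x * x') = x * J y z x' + x' * J y z x := by
    -- the cross terms `P y x * P z x'`, ... of the Leibniz rules cancel by antisymmetry
    simp only [hJ_apply, hP.1, hP.2, map_add]
    rw [hanti x' y, hanti x y]
    ring
  have hJ_eq_zero (y z : R) (hyz : ∀ m, J y z (f m) = 0) (x : R) : J y z x = 0 :=
    congr($(h.linearMap_ext_of_leibniz (hJ_leibniz y z) (fun _ _ => by simp) (G := 0) hyz) x)
  have h_two_generators (m n : M) (x : R) : J (f m) (f n) x = 0 :=
    hJ_eq_zero _ _ (fun l => hJ l m n) x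
  have h_one_generator (n : M) (x y : R) : J (f n) x y = 0 :=
    hJ_eq_zero _ _ (fun m => by rw [hJ_cycle, hJ_cycle]; exact h_two_generators m n x) y
  exact hJ_eq_zero y z (fun m => by rw [hJ_cycle, hJ_cycle]; exact h_one_generator m y z) x

end IsSymmetricAlgebra

end Biderivation

section Traces

variable {k A R : Type*} [CommRing k] [Ring A] [Algebra k A] [CommRing R] [Algebra k R]
  (ι : (A ⧸ commSpan k A) →ₗ[k] R)

theorem commSpan.mk_mul_comm (x y : A) :
    (Submodule.Quotient.mk (x * y) : A ⧸ commSpan k A) = Submodule.Quotient.mk (y * x) :=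
  (Submodule.Quotient.eq _).mpr (Submodule.subset_span ⟨x, y, rfl⟩)

@[simp]
theorem piTwo_tmul (x y : A) :
    piTwo ι (x ⊗ₜ[k] y) = ι (Submodule.Quotient.mk x) * ι (Submodule.Quotient.mk y) := by
  simp [piTwo]

theorem piTwo_swapT (d : A ⊗[k] A) : piTwo ι (swapT k A d) = piTwo ι d := by
  induction d using TensorProduct.induction_on with
  | zero => simp
  | tmul x y => simp [swapT, mul_comm]
  | add d d' hd hd' => simp only [map_add, hd, hd']

theorem piTwo_one_tmul_mul (x : A) (d : A ⊗[k] A) :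
    piTwo ι (((1 : A) ⊗ₜ[k] x) * d) = piTwo ι (d * ((1 : A) ⊗ₜ[k] x)) := by
  induction d using TensorProduct.induction_on with
  | zero => simp
  | tmul u v => simp [commSpan.mk_mul_comm x v]
  | add d d' hd hd' => simp only [mul_add, add_mul, map_add, hd, hd']

theorem piTwo_one_tmul_mul_mul_one_tmul (b c : A) (d : A ⊗[k] A) :
    piTwo ι (((1 : A) ⊗ₜ[k] b) * d * ((1 : A) ⊗ₜ[k] c)) =
      piTwo ι (d * ((1 : A) ⊗ₜ[k] (c * b))) := by
  rw [mul_assoc, piTwo_one_tmul_mul, mul_assoc, Algebra.TensorProduct.tmul_mul_tmul, one_mul]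

theorem swapT_br {S : BimodStr k A} (D : DoubleBracket S) (a b : A) :
    swapT k A (D.br a b) = -D.br b a := by
  rw [D.antisymm b a, neg_neg]

theorem piTwo_br_antisymm {S : BimodStr k A} (D : DoubleBracket S) (a b : A) :
    piTwo ι (D.br a b) = -piTwo ι (D.br b a) := by
  rw [← map_neg, ← swapT_br, piTwo_swapT]

theorem piTwo_br_mul_comm {S : BimodStr k A}
    (hS : ∀ (a b : A) (d : A ⊗[k] A),
      S.act a d b = ((1 : A) ⊗ₜ[k] a) * d * ((1 : A) ⊗ₜ[k] b))
    (D : DoubleBracket S) (a x y : A) :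
    piTwo ι (D.br a (x * y)) = piTwo ι (D.br a (y * x)) := by
  simp only [D.leibniz_right, map_add, hS, piTwo_one_tmul_mul_mul_one_tmul, one_mul, mul_one]
  exact add_comm _ _

theorem exists_bilinear_mk_eq_piTwo_br {S : BimodStr k A}
    (hS : ∀ (a b : A) (d : A ⊗[k] A),
      S.act a d b = ((1 : A) ⊗ₜ[k] a) * d * ((1 : A) ⊗ₜ[k] b))
    (D : DoubleBracket S) :
    ∃ β : (A ⧸ commSpan k A) →ₗ[k] (A ⧸ commSpan k A) →ₗ[k] R, ∀ a b : A,
      β (Submodule.Quotient.mk a) (Submodule.Quotient.mk b) = piTwo ι (D.br a b) := by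
  set F := D.br.compr₂ (piTwo ι)
  have h_left : commSpan k A ≤ LinearMap.ker F := Submodule.span_le.2 <| by
    rintro _ ⟨x, y, rfl⟩
    refine LinearMap.ext fun b => ?_
    simp [F, piTwo_br_antisymm ι D _ b, piTwo_br_mul_comm ι hS D b x y]
  have h_right : commSpan k A ≤ LinearMap.ker F.flip := Submodule.span_le.2 <| by
    rintro _ ⟨x, y, rfl⟩
    refine LinearMap.ext fun a => ?_
    simp [F, piTwo_br_mul_comm ι hS D a x y]
  exact ⟨F.liftQ₂ _ _ h_left h_right, fun _ _ => rfl⟩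

noncomputable def piThree : (A ⊗[k] A) ⊗[k] A →ₗ[k] R :=
  TensorProduct.lift ((LinearMap.mul k R).compl₁₂ (piTwo ι) (ι ∘ₗ (commSpan k A).mkQ))

@[simp]
theorem piThree_tmul (u : A ⊗[k] A) (z : A) :
    piThree ι (u ⊗ₜ[k] z) = piTwo ι u * ι (Submodule.Quotient.mk z) := by
  simp [piThree]

theorem piThree_tau123 (t : (A ⊗[k] A) ⊗[k] A) : piThree ι (tau123 k A t) = piThree ι t := by
  have : piThree ι ∘ₗ tau123 k A = piThree ι :=
    TensorProduct.ext_threefold fun x y z => by simp [tau123]; ring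
  exact congr($this t)

theorem piThree_tau132 (t : (A ⊗[k] A) ⊗[k] A) : piThree ι (tau132 k A t) = piThree ι t := by
  have : piThree ι ∘ₗ tau132 k A = piThree ι :=
    TensorProduct.ext_threefold fun x y z => by simp [tau132]; ring
  exact congr($this t)

theorem piThree_tau12 (t : (A ⊗[k] A) ⊗[k] A) : piThree ι (tau12 k A t) = piThree ι t := by
  have : piThree ι ∘ₗ tau12 k A = piThree ι :=
    TensorProduct.ext_threefold fun x y z => by simp [tau12]; ring
  exact congr($this t)

theorem piThree_jac (br : A →ₗ[k] A →ₗ[k] A ⊗[k] A) (a b c : A) :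
    piThree ι (jac br a b c) = piThree ι (trL br a (br b c)) + piThree ι (trL br b (br c a)) +
      piThree ι (trL br c (br a b)) := by
  rw [jac, map_add, map_add, piThree_tau123, piThree_tau132]

theorem IsBiderivation.apply_piTwo {P : R →ₗ[k] R →ₗ[k] R} (hP : IsBiderivation P)
    {br : A →ₗ[k] A →ₗ[k] A ⊗[k] A}
    (hgen : ∀ a b : A, P (ι (Submodule.Quotient.mk a)) (ι (Submodule.Quotient.mk b)) =
      piTwo ι (br a b))
    (a : A) (d : A ⊗[k] A) :
    P (ι (Submodule.Quotient.mk a)) (piTwo ι d) =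
      piThree ι (trL br a d) + piThree ι (trL br a (swapT k A d)) := by
  induction d using TensorProduct.induction_on with
  | zero => simp
  | tmul x y =>
    simp only [trL, swapT, piTwo_tmul, hP.1, hgen, LinearEquiv.coe_coe, TensorProduct.comm_tmul,
      TensorProduct.map_tmul, LinearMap.id_coe, id_eq, piThree_tmul]
    ring
  | add d d' hd hd' => simp only [map_add, hd, hd']; ring

theorem jacobi_mk_of_weak_poisson {S : BimodStr k A} (D : DoubleBracket S)
    (hwk : ∀ a b c : A, jac D.br a b c = tau12 k A (jac D.br b a c))
    {P : R →ₗ[k] R →ₗ[k] R} (hP : IsBiderivation P)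
    (hgen : ∀ a b : A, P (ι (Submodule.Quotient.mk a)) (ι (Submodule.Quotient.mk b)) =
      piTwo ι (D.br a b))
    (a b c : A) :
    P (ι (Submodule.Quotient.mk a))
        (P (ι (Submodule.Quotient.mk b)) (ι (Submodule.Quotient.mk c)))
      + P (ι (Submodule.Quotient.mk b))
        (P (ι (Submodule.Quotient.mk c)) (ι (Submodule.Quotient.mk a)))
      + P (ι (Submodule.Quotient.mk c))
        (P (ι (Submodule.Quotient.mk a)) (ι (Submodule.Quotient.mk b))) = 0 := by
  have h_jac_acb : piThree ι (jac D.br a c b) = piThree ι (jac D.br a b c) := by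
    rw [hwk, piThree_tau12, piThree_jac, piThree_jac]
    ring
  simp only [hgen, hP.apply_piTwo ι hgen, swapT_br, map_neg]
  linear_combination piThree_jac ι D.br a c b - piThree_jac ι D.br a b c - h_jac_acb

end Traces

theorem right_weak_poisson_induces_poisson_on_sym_general
    {k A R : Type u} [Field k] [Ring A] [Algebra k A]
    [CommRing R] [Algebra k R]
    (S : BimodStr k A)
    (hS : ∀ (a b : A) (d : A ⊗[k] A),
      S.act a d b = ((1 : A) ⊗ₜ[k] a) * d * ((1 : A) ⊗ₜ[k] b))
    (D : DoubleBracket S)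
    (hwk : ∀ a b c : A, jac D.br a b c = tau12 k A (jac D.br b a c))
    (ι : (A ⧸ commSpan k A) →ₗ[k] R)
    (hUniv : ∀ (B : Type u) [CommRing B] [Algebra k B]
      (f : (A ⧸ commSpan k A) →ₗ[k] B), ∃! g : R →ₐ[k] B, ∀ q, g (ι q) = f q) :
    ∃ P : R →ₗ[k] R →ₗ[k] R,
      ((∀ x y z : R, P x (y * z) = y * P x z + P x y * z) ∧
       (∀ x y z : R, P (x * y) z = x * P y z + y * P x z) ∧
       (∀ a b : A, P (ι (Submodule.Quotient.mk a)) (ι (Submodule.Quotient.mk b))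
          = piTwo ι (D.br a b))) ∧
      (∀ x y : R, P x y = - P y x) ∧
      (∀ x y z : R, P x (P y z) + P y (P z x) + P z (P x y) = 0) ∧
      (∀ P' : R →ₗ[k] R →ₗ[k] R,
        ((∀ x y z : R, P' x (y * z) = y * P' x z + P' x y * z) ∧
         (∀ x y z : R, P' (x * y) z = x * P' y z + y * P' x z) ∧
         (∀ a b : A, P' (ι (Submodule.Quotient.mk a)) (ι (Submodule.Quotient.mk b))
            = piTwo ι (D.br a b))) → P' = P) := by
  have hSym : IsSymmetricAlgebra ι := .of_forall_existsUnique hUniv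
  obtain ⟨β, hβ⟩ := exists_bilinear_mk_eq_piTwo_br ι hS D
  obtain ⟨P, hP, hPβ⟩ := hSym.exists_isBiderivation β
  have hgen (a b : A) :
      P (ι (Submodule.Quotient.mk a)) (ι (Submodule.Quotient.mk b)) = piTwo ι (D.br a b) :=
    (hPβ _ _).trans (hβ a b)
  have hanti : ∀ x y : R, P x y = -P y x := hSym.antisymm_of_generators hP <| by
    intro m n
    obtain ⟨a, rfl⟩ := Submodule.Quotient.mk_surjective _ m
    obtain ⟨b, rfl⟩ := Submodule.Quotient.mk_surjective _ n
    rw [hgen, hgen, piTwo_br_antisymm]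
  refine ⟨P, ⟨hP.1, hP.2, hgen⟩, hanti, hSym.jacobi_of_generators hP hanti ?_, ?_⟩
  · rintro ⟨a⟩ ⟨b⟩ ⟨c⟩
    exact jacobi_mk_of_weak_poisson ι D hwk hP hgen a b c
  · rintro P' ⟨hP'_right, hP'_left, hP'_gen⟩
    refine hSym.biderivation_ext ⟨hP'_right, hP'_left⟩ hP ?_
    rintro ⟨a⟩ ⟨b⟩
    exact (hP'_gen a b).trans (hgen a b).symm

/-- Proposition `R-Ind`: a double `(12)`-weak Poisson bracket
associated with the right bimodule structure induces a unique Poisson bracket on the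
symmetric algebra `Sym(A/[A,A])` (here modelled by a commutative algebra `R` with the
universal property of the symmetric algebra of the `k`-vector space `A/[A,A]`) such that
`{ā,b̄} = π₂⟪a,b⟫`. -/
theorem right_weak_poisson_induces_poisson_on_sym
    {k A R : Type u} [Field k] [CharZero k] [Ring A] [Algebra k A]
    [CommRing R] [Algebra k R]
    (S : BimodStr k A)
    (hS : ∀ (a b : A) (d : A ⊗[k] A),
      S.act a d b = ((1 : A) ⊗ₜ[k] a) * d * ((1 : A) ⊗ₜ[k] b))
    (D : DoubleBracket S)
    (hwk : ∀ a b c : A, jac D.br a b c = tau12 k A (jac D.br b a c))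
    (ι : (A ⧸ commSpan k A) →ₗ[k] R)
    (hUniv : ∀ (B : Type u) [CommRing B] [Algebra k B]
      (f : (A ⧸ commSpan k A) →ₗ[k] B), ∃! g : R →ₐ[k] B, ∀ q, g (ι q) = f q) :
    ∃ P : R →ₗ[k] R →ₗ[k] R,
      ((∀ x y z : R, P x (y * z) = y * P x z + P x y * z) ∧
       (∀ x y z : R, P (x * y) z = x * P y z + y * P x z) ∧
       (∀ a b : A, P (ι (Submodule.Quotient.mk a)) (ι (Submodule.Quotient.mk b))
          = piTwo ι (D.br a b))) ∧
      (∀ x y : R, P x y = - P y x) ∧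
      (∀ x y z : R, P x (P y z) + P y (P z x) + P z (P x y) = 0) ∧
      (∀ P' : R →ₗ[k] R →ₗ[k] R,
        ((∀ x y z : R, P' x (y * z) = y * P' x z + P' x y * z) ∧
         (∀ x y z : R, P' (x * y) z = x * P' y z + y * P' x z) ∧
         (∀ a b : A, P' (ι (Submodule.Quotient.mk a)) (ι (Submodule.Quotient.mk b))
            = piTwo ι (D.br a b))) → P' = P) :=
  right_weak_poisson_induces_poisson_on_sym_general S hS D hwk ι hUniv
end

section
/- Let A = k⟨x₁,x₂,x₃⟩ and let f ∈ A be either of the form f = Σ_{w=0}^{d} γ_w x_j^w for some fixed j ∈ {1,2,3}, or of the form f = Σ_{w=0}^{d} γ_w (x₁+x₂+x₃)^w, with γ₀,…,γ_d ∈ k and d ≥ 0. Then the double bracket ⟪-,-⟫_f on A associated with the outer bimodule structure, determined by ⟪x_i,x_j⟫_f = Σ_{k=1}^{3} ε^{ijk} ∂̂_k(f), is a double Poisson bracket, and ⟪f,a⟫_f = 0 for all a ∈ A. -/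
open scoped TensorProduct

/-- The free algebra `k⟨x₁,x₂,x₃⟩`. -/
abbrev FA (k : Type*) [CommSemiring k] := FreeAlgebra k (Fin 3)

/-- The totally antisymmetric tensor `ε^{ijl}` with `ε^{123} = 1`. -/
def eps : Fin 3 → Fin 3 → Fin 3 → ℤ :=
  ![![![0, 0, 0], ![0, 0, 1], ![0, -1, 0]],
    ![![0, 0, -1], ![0, 0, 0], ![1, 0, 0]],
    ![![0, 1, 0], ![-1, 0, 0], ![0, 0, 0]]]

/-! ### Auxiliary machinery -/

section Mach

variable {k A : Type*} [CommRing k] [Ring A] [Algebra k A]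

@[simp] lemma swapT_tmul (a b : A) : swapT k A (a ⊗ₜ[k] b) = b ⊗ₜ[k] a := rfl

@[simp] lemma tau123_tmul (u v w : A) :
    tau123 k A ((u ⊗ₜ[k] v) ⊗ₜ[k] w) = (w ⊗ₜ[k] u) ⊗ₜ[k] v := rfl

@[simp] lemma tau132_tmul (u v w : A) :
    tau132 k A ((u ⊗ₜ[k] v) ⊗ₜ[k] w) = (v ⊗ₜ[k] w) ⊗ₜ[k] u := rfl

@[simp] lemma trL_tmul (br : A →ₗ[k] A →ₗ[k] A ⊗[k] A) (a u v : A) :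
    trL br a (u ⊗ₜ[k] v) = br a u ⊗ₜ[k] v := rfl

lemma tau123_tau123 (X : (A ⊗[k] A) ⊗[k] A) :
    tau123 k A (tau123 k A X) = tau132 k A X := by
  induction X using TensorProduct.induction_on with
  | zero => simp
  | tmul e w =>
    induction e using TensorProduct.induction_on with
    | zero => simp
    | tmul u v => simp
    | add x y hx hy => simp [TensorProduct.add_tmul, hx, hy]
  | add x y hx hy => simp [hx, hy]

lemma tau123_tau132 (X : (A ⊗[k] A) ⊗[k] A) :
    tau123 k A (tau132 k A X) = X := by
  induction X using TensorProduct.induction_on with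
  | zero => simp
  | tmul e w =>
    induction e using TensorProduct.induction_on with
    | zero => simp
    | tmul u v => simp
    | add x y hx hy => simp [TensorProduct.add_tmul, hx, hy]
  | add x y hx hy => simp [hx, hy]

lemma tau123_mul (X Y : (A ⊗[k] A) ⊗[k] A) :
    tau123 k A (X * Y) = tau123 k A X * tau123 k A Y := by
  induction X using TensorProduct.induction_on with
  | zero => simp
  | tmul e w =>
    induction Y using TensorProduct.induction_on with
    | zero => simp
    | tmul e' w' =>
      induction e using TensorProduct.induction_on with
      | zero => simp [TensorProduct.zero_tmul]
      | tmul u v =>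
        induction e' using TensorProduct.induction_on with
        | zero => simp [TensorProduct.zero_tmul]
        | tmul u' v' => simp [Algebra.TensorProduct.tmul_mul_tmul]
        | add x y hx hy =>
          simp only [TensorProduct.add_tmul, mul_add, add_mul, map_add, hx, hy]
      | add x y hx hy =>
        simp only [TensorProduct.add_tmul, mul_add, add_mul, map_add, hx, hy]
    | add x y hx hy => simp only [mul_add, add_mul, map_add, hx, hy]
  | add x y hx hy => simp only [mul_add, add_mul, map_add, hx, hy]

lemma tau132_mul (X Y : (A ⊗[k] A) ⊗[k] A) :
    tau132 k A (X * Y) = tau132 k A X * tau132 k A Y := by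
  induction X using TensorProduct.induction_on with
  | zero => simp
  | tmul e w =>
    induction Y using TensorProduct.induction_on with
    | zero => simp
    | tmul e' w' =>
      induction e using TensorProduct.induction_on with
      | zero => simp [TensorProduct.zero_tmul]
      | tmul u v =>
        induction e' using TensorProduct.induction_on with
        | zero => simp [TensorProduct.zero_tmul]
        | tmul u' v' => simp [Algebra.TensorProduct.tmul_mul_tmul]
        | add x y hx hy =>
          simp only [TensorProduct.add_tmul, mul_add, add_mul, map_add, hx, hy]
      | add x y hx hy =>
        simp only [TensorProduct.add_tmul, mul_add, add_mul, map_add, hx, hy]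
    | add x y hx hy => simp only [mul_add, add_mul, map_add, hx, hy]
  | add x y hx hy => simp only [mul_add, add_mul, map_add, hx, hy]

/-- cyclic invariance of the double Jacobiator (for any bilinear operation). -/
lemma jac_cyc (br : A →ₗ[k] A →ₗ[k] A ⊗[k] A) (a b c : A) :
    jac br a b c = tau123 k A (jac br b c a) := by
  simp only [jac, map_add, tau123_tau123, tau123_tau132]
  abel

variable (S : BimodStr k A)
  (hS : ∀ (a b : A) (d : A ⊗[k] A),
    S.act a d b = (a ⊗ₜ[k] (1 : A)) * d * ((1 : A) ⊗ₜ[k] b))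
  (D : DoubleBracket S)

include hS

lemma star_eq (a b : A) (d : A ⊗[k] A) :
    S.star a d b = ((1 : A) ⊗ₜ[k] a) * d * (b ⊗ₜ[k] (1 : A)) := by
  induction d using TensorProduct.induction_on with
  | zero => simp [BimodOn.star, hS]
  | tmul r s => simp [BimodOn.star, hS, Algebra.TensorProduct.tmul_mul_tmul]
  | add x y hx hy =>
    simp only [BimodOn.star, map_add] at hx hy ⊢
    rw [show S.act a (swapT k A x + swapT k A y) b
        = S.act a (swapT k A x) b + S.act a (swapT k A y) b from S.add_mid _ _ _ _]
    simp only [map_add, hx, hy, mul_add, add_mul]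

/-- Leibniz rule, right slot, in algebra form. -/
lemma lr (a b c : A) :
    D.br a (b * c) = (b ⊗ₜ[k] (1 : A)) * D.br a c + D.br a b * ((1 : A) ⊗ₜ[k] c) := by
  rw [D.leibniz_right a b c, hS, hS]
  rw [← Algebra.TensorProduct.one_def, one_mul, mul_one]

/-- Leibniz rule, left slot, in algebra form. -/
lemma ll (a b c : A) :
    D.br (b * c) a = ((1 : A) ⊗ₜ[k] b) * D.br c a + D.br b a * (c ⊗ₜ[k] (1 : A)) := by
  rw [D.leibniz_left a b c, star_eq S hS, star_eq S hS]
  rw [← Algebra.TensorProduct.one_def, one_mul, mul_one]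

lemma br_one_right (a : A) : D.br a 1 = 0 := by
  have h := lr S hS D a 1 1
  rw [one_mul, ← Algebra.TensorProduct.one_def, one_mul, mul_one] at h
  exact (left_eq_add.mp h)

lemma br_one_left (a : A) : D.br 1 a = 0 := by
  rw [D.antisymm 1 a, br_one_right S hS D, map_zero, neg_zero]

end Mach
section Mach2

variable {k A : Type*} [CommRing k] [Ring A] [Algebra k A]

lemma add_add_add_zero {M : Type*} [AddCommMonoid M] {a b c d : M}
    (h1 : a + c = 0) (h2 : b + d = 0) : (a + b) + (c + d) = 0 := by
  rw [add_add_add_comm, h1, h2, add_zero]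

/-- cross gadget: `crossA e (u ⊗ v) = (e * (1 ⊗ u)) ⊗ v`. -/
noncomputable def crossA (e : A ⊗[k] A) : A ⊗[k] A →ₗ[k] (A ⊗[k] A) ⊗[k] A :=
  TensorProduct.map ((LinearMap.mulLeft k e).comp (TensorProduct.mk k A A 1)) LinearMap.id

@[simp] lemma crossA_tmul (e : A ⊗[k] A) (u v : A) :
    crossA e (u ⊗ₜ[k] v) = (e * ((1 : A) ⊗ₜ[k] u)) ⊗ₜ[k] v := rfl

/-- cross gadget: `crossB e (r ⊗ s) = ((r ⊗ 1) * e) ⊗ s`. -/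
noncomputable def crossB (e : A ⊗[k] A) : A ⊗[k] A →ₗ[k] (A ⊗[k] A) ⊗[k] A :=
  TensorProduct.map ((LinearMap.mulRight k e).comp ((TensorProduct.mk k A A).flip 1))
    LinearMap.id

@[simp] lemma crossB_tmul (e : A ⊗[k] A) (r s : A) :
    crossB e (r ⊗ₜ[k] s) = ((r ⊗ₜ[k] (1 : A)) * e) ⊗ₜ[k] s := rfl

lemma crossA_add_left (x y d : A ⊗[k] A) :
    crossA (x + y) d = crossA x d + crossA y d := by
  induction d using TensorProduct.induction_on with
  | zero => simp
  | tmul u v => simp [add_mul, TensorProduct.add_tmul]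
  | add p q hp hq =>
    simp only [map_add, hp, hq]; abel

lemma crossA_zero_left (d : A ⊗[k] A) : crossA 0 d = 0 := by
  induction d using TensorProduct.induction_on with
  | zero => simp
  | tmul u v => simp
  | add p q hp hq => simp only [map_add, hp, hq, add_zero]

lemma crossB_add_left (x y d : A ⊗[k] A) :
    crossB (x + y) d = crossB x d + crossB y d := by
  induction d using TensorProduct.induction_on with
  | zero => simp
  | tmul u v => simp [mul_add, TensorProduct.add_tmul]
  | add p q hp hq =>
    simp only [map_add, hp, hq]; abel

lemma crossB_zero_left (d : A ⊗[k] A) : crossB 0 d = 0 := by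
  induction d using TensorProduct.induction_on with
  | zero => simp
  | tmul u v => simp
  | add p q hp hq => simp only [map_add, hp, hq, add_zero]

lemma cross_cancel (e d : A ⊗[k] A) :
    crossA e d + tau123 k A (crossB d (-(swapT k A e))) = 0 := by
  induction e using TensorProduct.induction_on with
  | zero => simp [crossA_zero_left]
  | tmul p q =>
    induction d using TensorProduct.induction_on with
    | zero => simp [crossB_zero_left]
    | tmul u v =>
      simp [Algebra.TensorProduct.tmul_mul_tmul]
    | add x y hx hy =>
      simp only [map_add, crossB_add_left]
      exact add_add_add_zero hx hy
  | add x y hx hy =>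
    simp only [crossA_add_left, map_add, neg_add]
    exact add_add_add_zero hx hy

variable (S : BimodStr k A)
  (hS : ∀ (a b : A) (d : A ⊗[k] A),
    S.act a d b = (a ⊗ₜ[k] (1 : A)) * d * ((1 : A) ⊗ₜ[k] b))
  (D : DoubleBracket S)

include hS

lemma trL_S1 (a c : A) (d : A ⊗[k] A) :
    trL D.br a ((c ⊗ₜ[k] (1 : A)) * d)
      = ((c ⊗ₜ[k] (1 : A)) ⊗ₜ[k] (1 : A)) * trL D.br a d + crossA (D.br a c) d := by
  induction d using TensorProduct.induction_on with
  | zero => simp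
  | tmul u v =>
    rw [Algebra.TensorProduct.tmul_mul_tmul, one_mul, trL_tmul, trL_tmul,
      lr S hS D a c u, Algebra.TensorProduct.tmul_mul_tmul, one_mul, crossA_tmul,
      TensorProduct.add_tmul]
  | add x y hx hy => simp only [mul_add, map_add, hx, hy]; abel

lemma trL_S2 (a c' : A) (d : A ⊗[k] A) :
    trL D.br a (d * ((1 : A) ⊗ₜ[k] c'))
      = trL D.br a d * (((1 : A) ⊗ₜ[k] (1 : A)) ⊗ₜ[k] c') := by
  induction d using TensorProduct.induction_on with
  | zero => simp
  | tmul u v =>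
    rw [Algebra.TensorProduct.tmul_mul_tmul, mul_one, trL_tmul, trL_tmul,
      Algebra.TensorProduct.tmul_mul_tmul, ← Algebra.TensorProduct.one_def, mul_one]
  | add x y hx hy => simp only [add_mul, map_add, hx, hy]

lemma trL_S3 (b c : A) (d : A ⊗[k] A) :
    trL D.br b (((1 : A) ⊗ₜ[k] c) * d)
      = (((1 : A) ⊗ₜ[k] (1 : A)) ⊗ₜ[k] c) * trL D.br b d := by
  induction d using TensorProduct.induction_on with
  | zero => simp
  | tmul r s =>
    rw [Algebra.TensorProduct.tmul_mul_tmul, one_mul, trL_tmul, trL_tmul,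
      Algebra.TensorProduct.tmul_mul_tmul, ← Algebra.TensorProduct.one_def, one_mul]
  | add x y hx hy => simp only [mul_add, map_add, hx, hy]

lemma trL_S4 (b c' : A) (d : A ⊗[k] A) :
    trL D.br b (d * (c' ⊗ₜ[k] (1 : A)))
      = crossB (D.br b c') d + trL D.br b d * (((1 : A) ⊗ₜ[k] c') ⊗ₜ[k] (1 : A)) := by
  induction d using TensorProduct.induction_on with
  | zero => simp
  | tmul r s =>
    rw [Algebra.TensorProduct.tmul_mul_tmul, mul_one, trL_tmul, trL_tmul,
      lr S hS D b r c', Algebra.TensorProduct.tmul_mul_tmul, mul_one, crossB_tmul,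
      TensorProduct.add_tmul]
  | add x y hx hy => simp only [add_mul, map_add, hx, hy]; abel

lemma trL_S5 (c c' : A) (m : A ⊗[k] A) :
    trL D.br (c * c') m
      = (((1 : A) ⊗ₜ[k] c) ⊗ₜ[k] (1 : A)) * trL D.br c' m
        + trL D.br c m * ((c' ⊗ₜ[k] (1 : A)) ⊗ₜ[k] (1 : A)) := by
  induction m using TensorProduct.induction_on with
  | zero => simp
  | tmul m1 m2 =>
    rw [trL_tmul, trL_tmul, trL_tmul, ll S hS D m1 c c',
      Algebra.TensorProduct.tmul_mul_tmul, one_mul,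
      Algebra.TensorProduct.tmul_mul_tmul, mul_one, TensorProduct.add_tmul]
  | add x y hx hy => simp only [map_add, hx, hy, mul_add, add_mul]; abel

lemma jac_mul (a b c c' : A) :
    jac D.br a b (c * c')
      = ((c ⊗ₜ[k] (1 : A)) ⊗ₜ[k] (1 : A)) * jac D.br a b c'
        + jac D.br a b c * (((1 : A) ⊗ₜ[k] (1 : A)) ⊗ₜ[k] c') := by
  have ht2a : ∀ X : (A ⊗[k] A) ⊗[k] A,
      tau123 k A ((((1 : A) ⊗ₜ[k] (1 : A)) ⊗ₜ[k] c) * X)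
        = ((c ⊗ₜ[k] (1 : A)) ⊗ₜ[k] (1 : A)) * tau123 k A X := by
    intro X; rw [tau123_mul, tau123_tmul]
  have ht2b : ∀ X : (A ⊗[k] A) ⊗[k] A,
      tau123 k A (X * (((1 : A) ⊗ₜ[k] c') ⊗ₜ[k] (1 : A)))
        = tau123 k A X * (((1 : A) ⊗ₜ[k] (1 : A)) ⊗ₜ[k] c') := by
    intro X; rw [tau123_mul, tau123_tmul]
  have ht3a : ∀ X : (A ⊗[k] A) ⊗[k] A,
      tau132 k A ((((1 : A) ⊗ₜ[k] c) ⊗ₜ[k] (1 : A)) * X)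
        = ((c ⊗ₜ[k] (1 : A)) ⊗ₜ[k] (1 : A)) * tau132 k A X := by
    intro X; rw [tau132_mul, tau132_tmul]
  have ht3b : ∀ X : (A ⊗[k] A) ⊗[k] A,
      tau132 k A (X * ((c' ⊗ₜ[k] (1 : A)) ⊗ₜ[k] (1 : A)))
        = tau132 k A X * (((1 : A) ⊗ₜ[k] (1 : A)) ⊗ₜ[k] c') := by
    intro X; rw [tau132_mul, tau132_tmul]
  have hcan := cross_cancel (D.br a c) (D.br b c')
  simp only [jac]
  rw [lr S hS D b c c', ll S hS D a c c', D.antisymm c a]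
  simp only [map_add]
  rw [trL_S1 S hS D a c (D.br b c'), trL_S2 S hS D a c' (D.br b c),
    trL_S3 S hS D b c (D.br c' a), trL_S4 S hS D b c' (-(swapT k A) (D.br a c)),
    trL_S5 S hS D c c' (D.br a b)]
  simp only [map_add]
  rw [ht2a, ht2b, ht3a, ht3b]
  rw [eq_neg_of_add_eq_zero_left hcan]
  simp only [mul_add, add_mul]
  abel

lemma trL_one_left (X : A ⊗[k] A) : trL D.br 1 X = 0 := by
  induction X using TensorProduct.induction_on with
  | zero => simp
  | tmul u v => rw [trL_tmul, br_one_left S hS D, TensorProduct.zero_tmul]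
  | add x y hx hy => simp only [map_add, hx, hy, add_zero]

lemma jac_one (a b : A) : jac D.br a b 1 = 0 := by
  simp only [jac, br_one_right S hS D, br_one_left S hS D, map_zero,
    trL_one_left S hS D, add_zero, zero_add]

omit hS

lemma jac_add_right (br : A →ₗ[k] A →ₗ[k] A ⊗[k] A) (a b c c' : A) :
    jac br a b (c + c') = jac br a b c + jac br a b c' := by
  simp only [jac, trL, map_add, TensorProduct.map_add_left, LinearMap.add_apply]
  abel

lemma jac_smul_right (br : A →ₗ[k] A →ₗ[k] A ⊗[k] A) (r : k) (a b c : A) :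
    jac br a b (r • c) = r • jac br a b c := by
  simp only [jac, trL, map_smul, TensorProduct.map_smul_left, LinearMap.smul_apply,
    smul_add]

end Mach2
section Free

variable {k : Type*} [Field k]
variable (S : BimodStr k (FA k))
  (hS : ∀ (a b : FA k) (d : FA k ⊗[k] FA k),
    S.act a d b = (a ⊗ₜ[k] (1 : FA k)) * d * ((1 : FA k) ⊗ₜ[k] b))
  (D : DoubleBracket S)

include hS

lemma jac_gen_ext (a b : FA k)
    (hgen : ∀ l, jac D.br a b (FreeAlgebra.ι k l) = 0) (c : FA k) :
    jac D.br a b c = 0 := by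
  induction c using FreeAlgebra.induction with
  | grade0 r =>
    rw [Algebra.algebraMap_eq_smul_one, jac_smul_right, jac_one S hS D, smul_zero]
  | grade1 x => exact hgen x
  | mul x y hx hy => rw [jac_mul S hS D, hx, hy, mul_zero, zero_mul, add_zero]
  | add x y hx hy => rw [jac_add_right, hx, hy, add_zero]

lemma jac_all
    (hgen3 : ∀ i j l : Fin 3,
      jac D.br (FreeAlgebra.ι k i) (FreeAlgebra.ι k j) (FreeAlgebra.ι k l) = 0) :
    ∀ a b c : FA k, jac D.br a b c = 0 := by
  have s1 : ∀ i j c, jac D.br (FreeAlgebra.ι k i) (FreeAlgebra.ι k j) c = 0 :=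
    fun i j => jac_gen_ext S hS D _ _ (hgen3 i j)
  have s2 : ∀ c i j, jac D.br c (FreeAlgebra.ι k i) (FreeAlgebra.ι k j) = 0 := by
    intro c i j; rw [jac_cyc, s1, map_zero]
  have s3 : ∀ a i c, jac D.br a (FreeAlgebra.ι k i) c = 0 :=
    fun a i => jac_gen_ext S hS D _ _ (s2 a i)
  have s4 : ∀ a b l, jac D.br a b (FreeAlgebra.ι k l) = 0 := by
    intro a b l; rw [jac_cyc, s3, map_zero]
  intro a b c; exact jac_gen_ext S hS D a b (s4 a b) c

end Free
/-- Theorem `ProbRes`: for `f = Σ_w γ_w x_j^w` or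
`f = Σ_w γ_w (x₁+x₂+x₃)^w` in `k⟨x₁,x₂,x₃⟩`, the gradient double bracket `⟪-,-⟫_f`
(associated with the outer bimodule structure, with
`⟪x_i,x_j⟫_f = Σ_l ε^{ijl} ∂̂_l(f)`) is a double Poisson bracket, and `⟪f,-⟫_f = 0`. -/
theorem gradient_double_poisson_for_powers
    {k : Type*} [Field k] [CharZero k]
    (S : BimodStr k (FA k))
    (hS : ∀ (a b : FA k) (d : FA k ⊗[k] FA k),
      S.act a d b = (a ⊗ₜ[k] (1 : FA k)) * d * ((1 : FA k) ⊗ₜ[k] b))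
    (dd : Fin 3 → (FA k →ₗ[k] FA k ⊗[k] FA k))
    (hdd : ∀ (j : Fin 3) (a b : FA k),
      dd j (a * b) = (a ⊗ₜ[k] (1 : FA k)) * dd j b + dd j a * ((1 : FA k) ⊗ₜ[k] b))
    (hdd0 : ∀ j l : Fin 3,
      dd j (FreeAlgebra.ι k l) = if j = l then ((1 : FA k) ⊗ₜ[k] (1 : FA k)) else 0)
    (f : FA k)
    (hf : (∃ (j : Fin 3) (d : ℕ) (γ : ℕ → k),
            f = ∑ w ∈ Finset.range (d + 1), γ w • (FreeAlgebra.ι k j) ^ w) ∨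
          (∃ (d : ℕ) (γ : ℕ → k),
            f = ∑ w ∈ Finset.range (d + 1),
              γ w • (FreeAlgebra.ι k 0 + FreeAlgebra.ι k 1 + FreeAlgebra.ι k 2) ^ w))
    (D : DoubleBracket S)
    (hvals : ∀ i j : Fin 3,
      D.br (FreeAlgebra.ι k i) (FreeAlgebra.ι k j) = ∑ l : Fin 3, eps i j l • dd l f) :
    (∀ a b c : FA k, jac D.br a b c = 0) ∧
    (∀ a : FA k, D.br f a = 0) := by
  classical
  have hb1r : ∀ a : FA k, D.br a 1 = 0 := br_one_right S hS D
  have hb1l : ∀ a : FA k, D.br 1 a = 0 := br_one_left S hS D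
  have hdd1 : ∀ j, dd j (1 : FA k) = 0 := by
    intro j
    have h := hdd j 1 1
    rw [one_mul, ← Algebra.TensorProduct.one_def, one_mul, mul_one] at h
    exact left_eq_add.mp h
  have heps : ∀ i j : Fin 3, eps i j j = 0 := by decide
  -- unified setup
  obtain ⟨g, hg0, dN, γ, hfg, hBg⟩ :
      ∃ (g : FA k), (∀ l, dd l g = 0 ∨ dd l g = (1 : FA k) ⊗ₜ[k] (1 : FA k)) ∧
        ∃ (dN : ℕ) (γ : ℕ → k),
          f = ∑ w ∈ Finset.range (dN + 1), γ w • g ^ w ∧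
          (∀ i : Fin 3, D.br (FreeAlgebra.ι k i) g = 0) := by
    rcases hf with ⟨j, dN, γ, hf1⟩ | ⟨dN, γ, hf2⟩
    · refine ⟨FreeAlgebra.ι k j, ?_, dN, γ, hf1, ?_⟩
      · intro l
        rcases eq_or_ne l j with h | h
        · right; simp [hdd0, h]
        · left; simp [hdd0, h]
      · intro i
        rw [hvals i j]
        refine Finset.sum_eq_zero fun l _ => ?_
        rcases eq_or_ne l j with h | h
        · subst h; rw [heps, zero_smul]
        · have hpow : ∀ w, dd l ((FreeAlgebra.ι k j : FA k) ^ w) = 0 := by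
            intro w
            induction w with
            | zero => rw [pow_zero]; exact hdd1 l
            | succ w ih =>
              rw [pow_succ, hdd l _ _, ih, hdd0 l j, if_neg h, mul_zero, zero_mul,
                add_zero]
          have : dd l f = 0 := by
            rw [hf1, map_sum]
            exact Finset.sum_eq_zero fun w _ => by rw [map_smul, hpow, smul_zero]
          rw [this, smul_zero]
    · refine ⟨FreeAlgebra.ι k 0 + FreeAlgebra.ι k 1 + FreeAlgebra.ι k 2, ?_, dN, γ, hf2, ?_⟩
      · intro l; right
        rw [map_add, map_add]
        fin_cases l <;> simp [hdd0]
      · have hgval : ∀ l, dd l (FreeAlgebra.ι k 0 + FreeAlgebra.ι k 1 + FreeAlgebra.ι k 2 : FA k)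
            = (1 : FA k) ⊗ₜ[k] (1 : FA k) := by
          intro l
          rw [map_add, map_add]
          fin_cases l <;> simp [hdd0]
        have hddeq : ∀ l w, dd l ((FreeAlgebra.ι k 0 + FreeAlgebra.ι k 1 + FreeAlgebra.ι k 2 : FA k) ^ w)
            = dd 0 ((FreeAlgebra.ι k 0 + FreeAlgebra.ι k 1 + FreeAlgebra.ι k 2 : FA k) ^ w) := by
          intro l w
          induction w with
          | zero => rw [pow_zero, hdd1, hdd1]
          | succ w ih => rw [pow_succ, hdd l _ _, hdd 0 _ _, ih, hgval l, hgval 0]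
        have hddfeq : ∀ l, dd l f = dd 0 f := by
          intro l
          rw [hf2, map_sum, map_sum]
          exact Finset.sum_congr rfl fun w _ => by rw [map_smul, map_smul, hddeq]
        intro i
        rw [map_add, map_add, hvals i 0, hvals i 1, hvals i 2]
        simp only [hddfeq]
        rw [← Finset.sum_smul, ← Finset.sum_smul, ← Finset.sum_smul, ← add_smul, ← add_smul]
        have hz : ((∑ l : Fin 3, eps i 0 l) + (∑ l : Fin 3, eps i 1 l)
            + (∑ l : Fin 3, eps i 2 l)) = 0 := by
          fin_cases i <;> decide
        rw [hz, zero_smul]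
  -- vanishing of the bracket against g and f
  have hBag : ∀ a : FA k, D.br a g = 0 := by
    intro a
    induction a using FreeAlgebra.induction with
    | grade0 r =>
      rw [Algebra.algebraMap_eq_smul_one, map_smul, LinearMap.smul_apply, hb1l, smul_zero]
    | grade1 i => exact hBg i
    | mul x y hx hy => rw [ll S hS D g x y, hx, hy, mul_zero, zero_mul, add_zero]
    | add x y hx hy => rw [map_add, LinearMap.add_apply, hx, hy, add_zero]
  have hBagpow : ∀ (a : FA k) (w : ℕ), D.br a (g ^ w) = 0 := by
    intro a w
    induction w with
    | zero => rw [pow_zero]; exact hb1r a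
    | succ w ih => rw [pow_succ, lr S hS D, ih, hBag, mul_zero, zero_mul, add_zero]
  have hBaf : ∀ a : FA k, D.br a f = 0 := by
    intro a
    rw [hfg, map_sum]
    exact Finset.sum_eq_zero fun w _ => by rw [map_smul, hBagpow, smul_zero]
  have part2 : ∀ a : FA k, D.br f a = 0 := by
    intro a
    rw [D.antisymm f a, hBaf, map_zero, neg_zero]
  -- the span of g-power tensors
  set Sp : Submodule k (FA k ⊗[k] FA k) :=
    Submodule.span k (Set.range fun pq : ℕ × ℕ => (g ^ pq.1) ⊗ₜ[k] (g ^ pq.2)) with hSp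
  have hSpmul : ∀ X ∈ Sp, X * ((1 : FA k) ⊗ₜ[k] g) ∈ Sp := by
    intro X hX
    induction hX using Submodule.span_induction with
    | mem x hx =>
      obtain ⟨⟨p, q⟩, rfl⟩ := hx
      rw [Algebra.TensorProduct.tmul_mul_tmul, mul_one, ← pow_succ]
      exact Submodule.subset_span ⟨(p, q + 1), rfl⟩
    | zero => rw [zero_mul]; exact zero_mem _
    | add x y _ _ hx hy => rw [add_mul]; exact add_mem hx hy
    | smul r x _ hx => rw [smul_mul_assoc]; exact Submodule.smul_mem _ _ hx
  have hddSp : ∀ (l : Fin 3) (w : ℕ), dd l (g ^ w) ∈ Sp := by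
    intro l w
    induction w with
    | zero => rw [pow_zero, hdd1 l]; exact zero_mem _
    | succ w ih =>
      rw [pow_succ, hdd l (g ^ w) g]
      refine add_mem ?_ (hSpmul _ ih)
      rcases hg0 l with h | h
      · rw [h, mul_zero]; exact zero_mem _
      · rw [h, Algebra.TensorProduct.tmul_mul_tmul, mul_one, mul_one]
        exact Submodule.subset_span ⟨(w, 0), by simp⟩
  have hddfSp : ∀ l : Fin 3, dd l f ∈ Sp := by
    intro l
    rw [hfg, map_sum]
    exact Submodule.sum_mem _ fun w _ => by
      rw [map_smul]; exact Submodule.smul_mem _ _ (hddSp l w)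
  have hBSp : ∀ i m : Fin 3, D.br (FreeAlgebra.ι k i) (FreeAlgebra.ι k m) ∈ Sp := by
    intro i m
    rw [hvals i m]
    refine Submodule.sum_mem _ fun l _ => ?_
    rw [← Int.cast_smul_eq_zsmul k]
    exact Submodule.smul_mem _ _ (hddfSp l)
  have hkill : ∀ (i : Fin 3) (X : FA k ⊗[k] FA k), X ∈ Sp →
      trL D.br (FreeAlgebra.ι k i) X = 0 := by
    intro i X hX
    induction hX using Submodule.span_induction with
    | mem x hx =>
      obtain ⟨⟨p, q⟩, rfl⟩ := hx
      rw [trL_tmul, hBagpow _ p, TensorProduct.zero_tmul]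
    | zero => rw [map_zero]
    | add x y _ _ hx hy => rw [map_add, hx, hy, add_zero]
    | smul r x _ hx => rw [map_smul, hx, smul_zero]
  have hgen3 : ∀ i j l : Fin 3,
      jac D.br (FreeAlgebra.ι k i) (FreeAlgebra.ι k j) (FreeAlgebra.ι k l) = 0 := by
    intro i j l
    simp only [jac]
    rw [hkill i _ (hBSp j l), hkill j _ (hBSp l i), hkill l _ (hBSp i j),
      map_zero, map_zero, add_zero, add_zero]
  exact ⟨jac_all S hS D hgen3, part2⟩
end
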